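/- arXiv:2502.21008 — 2 statements merged into one kernel-verified Lean document; each statement's English description precedes it below -/
import Mathlib

section
/- For 0 < x ≤ y and m ∈ ℕ with m ≥ 1 and y ≤ m, the Bessel function of the first kind satisfies J_m(x) ≤ e^{y−x}·(x/y)^m·J_m(y). -/
/-!
Write `J_m(x) = (x/2)^m F_m(x²/4)` with `F_m(t) = ∑ (-1)^k t^k / (k! (m+k)!)`, an entire function
with `F_m' = -F_{m+1}` and `(m+1) F_{m+1}(t) = F_m(t) + t F_{m+2}(t)`. The claim says that
`G(x) = e^x F_m(x²/4)` is nondecreasing on `[0, m]`. Its derivative `G' = e^x (F_m - (x/2) F_{m+1})`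
equals `1/m! > 0` at `0`, and `G'' = e^x (m + 1/2 - x) F_{m+1}(x²/4)`. At a first zero `c ≤ m` of
`G'`, `G` has increased on `[0, c]`, so `e^c (c/2) F_{m+1}(c²/4) = G(c) - G'(c) > 0`, whence
`G''(c) > 0`: impossible for a function reaching `0` from above.
-/

open Set Topology Real
open scoped Nat

/-- The Bessel function of the first kind of nonnegative integer order `m`,
defined by its power series. -/
noncomputable def besselJ (m : ℕ) (x : ℝ) : ℝ :=
  ∑' k : ℕ, (-1 : ℝ) ^ k * (x / 2) ^ (m + 2 * k) /
    ((Nat.factorial k * Nat.factorial (m + k) : ℕ) : ℝ)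

theorem pos_on_Icc_of_deriv_pos_at_first_zero {f f' : ℝ → ℝ} {a b : ℝ}
    (hf : ∀ x ∈ Icc a b, HasDerivAt f (f' x) x) (ha : 0 < f a)
    (hzero : ∀ c ∈ Ioc a b, f c = 0 → (∀ x ∈ Ico a c, 0 < f x) → 0 < f' c) :
    ∀ x ∈ Icc a b, 0 < f x := by
  by_contra! h
  obtain ⟨x, hx, hfx⟩ := h
  have hcont : ContinuousOn f (Icc a b) := fun x hx ↦ (hf x hx).continuousAt.continuousWithinAt
  have hS : IsCompact (Icc a b ∩ f ⁻¹' Iic 0) := isCompact_Icc.of_isClosed_subset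
    (hcont.preimage_isClosed_of_isClosed isClosed_Icc isClosed_Iic) inter_subset_left
  obtain ⟨c, ⟨⟨hac, hcb⟩, hfc⟩, hcmin⟩ := hS.exists_isLeast ⟨x, hx, hfx⟩
  have hbefore : ∀ z ∈ Ico a c, 0 < f z := fun z hz ↦ by
    by_contra! hfz
    exact hz.2.not_ge (hcmin ⟨⟨hz.1, hz.2.le.trans hcb⟩, hfz⟩)
  have hac' : a < c := hac.lt_of_ne (by rintro rfl; exact hfc.not_gt ha)
  have hleft : ∀ᶠ z in 𝓝[<] c, z ∈ Ioo a c := Ioo_mem_nhdsLT hac'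
  have hderiv := hf c ⟨hac, hcb⟩
  have hfc0 : f c = 0 := le_antisymm hfc <|
    ge_of_tendsto (hderiv.continuousAt.tendsto.mono_left nhdsWithin_le_nhds)
      (hleft.mono fun z hz ↦ (hbefore z ⟨hz.1.le, hz.2⟩).le)
  have hslope : ∀ᶠ z in 𝓝[<] c, 0 < slope f c z :=
    ((hasDerivAt_iff_tendsto_slope.mp hderiv).mono_left (nhdsLT_le_nhdsNE c)).eventually
      (lt_mem_nhds (hzero c ⟨hac', hcb⟩ hfc0 hbefore))
  obtain ⟨z, hz, hzs⟩ := (hleft.and hslope).exists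
  rw [slope_def_field, hfc0, sub_zero] at hzs
  exact (div_neg_of_pos_of_neg (hbefore z ⟨hz.1.le, hz.2⟩) (sub_neg.2 hz.2)).not_gt hzs

noncomputable def besselF (m : ℕ) (t : ℝ) : ℝ :=
  ∑' k : ℕ, (-1 : ℝ) ^ k * t ^ k / (k ! * (m + k)! : ℝ)

lemma abs_besselF_term_le (m k : ℕ) (t : ℝ) :
    |(-1 : ℝ) ^ k * t ^ k / (k ! * (m + k)! : ℝ)| ≤ |t| ^ k / k ! := by
  have hden : (0 : ℝ) < k ! * (m + k)! := by positivity
  rw [abs_div, abs_mul, abs_pow, abs_pow, abs_neg, abs_one, one_pow, one_mul, abs_of_pos hden]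
  gcongr
  exact le_mul_of_one_le_right (by positivity) (mod_cast (m + k).factorial_pos)

lemma summable_besselF_term (m : ℕ) (t : ℝ) :
    Summable fun k : ℕ ↦ (-1 : ℝ) ^ k * t ^ k / (k ! * (m + k)! : ℝ) :=
  .of_norm_bounded (Real.summable_pow_div_factorial |t|) (abs_besselF_term_le m · t)

lemma besselF_eq_add_tsum (m : ℕ) (t : ℝ) :
    besselF m t = 1 / m ! +
      ∑' k : ℕ, (-1 : ℝ) ^ (k + 1) * t ^ (k + 1) / ((k + 1)! * (m + (k + 1))! : ℝ) := by
  rw [besselF, (summable_besselF_term m t).tsum_eq_zero_add]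
  simp

lemma besselF_zero (m : ℕ) : besselF m 0 = 1 / m ! := by
  simp [besselF_eq_add_tsum]

lemma hasDerivAt_besselF (m : ℕ) (t : ℝ) : HasDerivAt (besselF m) (-besselF (m + 1) t) t := by
  have hterm : ∀ k y, HasDerivAt
      (fun z ↦ (-1 : ℝ) ^ (k + 1) * z ^ (k + 1) / ((k + 1)! * (m + (k + 1))! : ℝ))
      (-((-1 : ℝ) ^ k * y ^ k / (k ! * (m + 1 + k)! : ℝ))) y := fun k y ↦ by
    refine (((hasDerivAt_pow (k + 1) y).const_mul _).div_const _).congr_deriv ?_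
    rw [show m + 1 + k = m + (k + 1) by ring]
    push_cast [Nat.factorial_succ]
    field_simp
    ring
  set R := |t| + 1
  have ht : t ∈ Metric.ball (0 : ℝ) R := by simp [R]
  have hbound : ∀ k, ∀ y ∈ Metric.ball (0 : ℝ) R,
      ‖-((-1 : ℝ) ^ k * y ^ k / (k ! * (m + 1 + k)! : ℝ))‖ ≤ R ^ k / k ! := fun k y hy ↦ by
    rw [norm_neg, Real.norm_eq_abs]
    refine (abs_besselF_term_le (m + 1) k y).trans ?_
    rw [mem_ball_zero_iff, Real.norm_eq_abs] at hy
    gcongr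
  have hsum := hasDerivAt_tsum_of_isPreconnected (Real.summable_pow_div_factorial R)
    Metric.isOpen_ball (convex_ball 0 R).isPreconnected (fun k y _ ↦ hterm k y) hbound ht
    ((summable_nat_add_iff 1).mpr (summable_besselF_term m t)) ht
  rw [tsum_neg] at hsum
  rw [show besselF m = _ from funext (besselF_eq_add_tsum m)]
  exact hsum.const_add _

lemma besselF_recurrence (m : ℕ) (t : ℝ) :
    (m + 1) * besselF (m + 1) t = besselF m t + t * besselF (m + 2) t := by
  rw [besselF_eq_add_tsum m, besselF_eq_add_tsum (m + 1), besselF, ← tsum_mul_left,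
    add_assoc, ← ((summable_nat_add_iff 1).mpr (summable_besselF_term m t)).tsum_add
      ((summable_besselF_term (m + 2) t).mul_left t), mul_add, ← tsum_mul_left]
  congr 1
  · push_cast [Nat.factorial_succ]
    field_simp
  · refine tsum_congr fun k ↦ ?_
    rw [show m + 2 + k = m + (k + 1) + 1 by ring, show m + 1 + (k + 1) = m + (k + 1) + 1 by ring]
    push_cast [Nat.factorial_succ, pow_succ]
    field_simp
    ring

lemma besselJ_eq_mul_besselF (m : ℕ) (x : ℝ) :
    besselJ m x = (x / 2) ^ m * besselF m (x ^ 2 / 4) := by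
  rw [besselJ, besselF, ← tsum_mul_left]
  refine tsum_congr fun k ↦ ?_
  rw [show x ^ 2 / 4 = (x / 2) ^ 2 by ring, ← pow_mul, pow_add]
  push_cast
  ring

lemma hasDerivAt_besselF_sq_div_four (m : ℕ) (x : ℝ) :
    HasDerivAt (fun x ↦ besselF m (x ^ 2 / 4)) (-(x / 2) * besselF (m + 1) (x ^ 2 / 4)) x := by
  refine ((hasDerivAt_besselF m _).comp x ((hasDerivAt_pow 2 x).div_const 4)).congr_deriv ?_
  push_cast
  ring

-- `e^x (x/2)^(-m) J_m(x)` for `x ≠ 0`.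
noncomputable def scaledBessel (m : ℕ) (x : ℝ) : ℝ := exp x * besselF m (x ^ 2 / 4)

noncomputable def scaledBesselDeriv (m : ℕ) (x : ℝ) : ℝ :=
  exp x * (besselF m (x ^ 2 / 4) - x / 2 * besselF (m + 1) (x ^ 2 / 4))

lemma hasDerivAt_scaledBessel (m : ℕ) (x : ℝ) :
    HasDerivAt (scaledBessel m) (scaledBesselDeriv m x) x := by
  refine ((hasDerivAt_exp x).mul (hasDerivAt_besselF_sq_div_four m x)).congr_deriv ?_
  rw [scaledBesselDeriv]
  ring

lemma hasDerivAt_scaledBesselDeriv (m : ℕ) (x : ℝ) :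
    HasDerivAt (scaledBesselDeriv m)
      (exp x * ((m + 1 / 2 - x) * besselF (m + 1) (x ^ 2 / 4))) x := by
  refine ((hasDerivAt_exp x).mul ((hasDerivAt_besselF_sq_div_four m x).sub
    (((hasDerivAt_id x).div_const 2).mul
      (hasDerivAt_besselF_sq_div_four (m + 1) x)))).congr_deriv ?_
  simp only [Pi.sub_apply, Pi.mul_apply, id]
  linear_combination (-exp x) * besselF_recurrence m (x ^ 2 / 4)

lemma monotoneOn_scaledBessel_of_deriv_nonneg (m : ℕ) {c : ℝ}
    (h : ∀ x ∈ Ioo 0 c, 0 ≤ scaledBesselDeriv m x) : MonotoneOn (scaledBessel m) (Icc 0 c) :=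
  monotoneOn_of_hasDerivWithinAt_nonneg (convex_Icc 0 c)
    (fun x _ ↦ (hasDerivAt_scaledBessel m x).continuousAt.continuousWithinAt)
    (fun x _ ↦ (hasDerivAt_scaledBessel m x).hasDerivWithinAt)
    (by simpa only [interior_Icc] using h)

lemma scaledBesselDeriv_pos (m : ℕ) : ∀ x ∈ Icc (0 : ℝ) m, 0 < scaledBesselDeriv m x := by
  refine pos_on_Icc_of_deriv_pos_at_first_zero (fun x _ ↦ hasDerivAt_scaledBesselDeriv m x)
    (by simp [scaledBesselDeriv, besselF_zero]; positivity) fun c ⟨hc0, hcm⟩ hzero hbefore ↦ ?_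
  have hmono := monotoneOn_scaledBessel_of_deriv_nonneg m fun x hx ↦ (hbefore x ⟨hx.1.le, hx.2⟩).le
  have hGc : 0 < scaledBessel m c := by
    refine lt_of_lt_of_le ?_ (hmono (left_mem_Icc.2 hc0.le) (right_mem_Icc.2 hc0.le) hc0.le)
    simp [scaledBessel, besselF_zero]
    positivity
  have hF : 0 < besselF (m + 1) (c ^ 2 / 4) := by
    have : scaledBessel m c = exp c * (c / 2 * besselF (m + 1) (c ^ 2 / 4)) := by
      rw [← sub_zero (scaledBessel m c), ← hzero, scaledBessel, scaledBesselDeriv]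
      ring
    rw [this] at hGc
    exact pos_of_mul_pos_right (pos_of_mul_pos_right hGc (exp_pos c).le) (by positivity)
  have : (0 : ℝ) < m + 1 / 2 - c := by linarith
  positivity

theorem besselJ_monotone_bound_general (m : ℕ) (x y : ℝ)
    (hx : 0 < x) (hxy : x ≤ y) (hym : y ≤ m) :
    besselJ m x ≤ Real.exp (y - x) * (x / y) ^ m * besselJ m y := by
  have hy : 0 < y := hx.trans_le hxy
  have hG : exp x * besselF m (x ^ 2 / 4) ≤ exp y * besselF m (y ^ 2 / 4) :=
    monotoneOn_scaledBessel_of_deriv_nonneg m (fun z hz ↦ (scaledBesselDeriv_pos m z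
      (Ioo_subset_Icc_self hz)).le) ⟨hx.le, hxy.trans hym⟩ ⟨hy.le, hym⟩ hxy
  have hF : besselF m (x ^ 2 / 4) ≤ exp (y - x) * besselF m (y ^ 2 / 4) := by
    rwa [exp_sub, div_mul_eq_mul_div, le_div_iff₀ (exp_pos x), mul_comm]
  have hpow : (x / 2) ^ m = (x / y) ^ m * (y / 2) ^ m := by
    rw [← mul_pow]
    field_simp
  rw [besselJ_eq_mul_besselF, besselJ_eq_mul_besselF, hpow]
  calc (x / y) ^ m * (y / 2) ^ m * besselF m (x ^ 2 / 4)
      ≤ (x / y) ^ m * (y / 2) ^ m * (exp (y - x) * besselF m (y ^ 2 / 4)) := by gcongr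
    _ = exp (y - x) * (x / y) ^ m * ((y / 2) ^ m * besselF m (y ^ 2 / 4)) := by ring

/-- for `0 < x ≤ y ≤ m`, `J_m(x) ≤ e^{y-x}(x/y)^m J_m(y)`. -/
theorem besselJ_monotone_bound (m : ℕ) (hm : 1 ≤ m) (x y : ℝ)
    (hx : 0 < x) (hxy : x ≤ y) (hym : y ≤ m) :
    besselJ m x ≤ Real.exp (y - x) * (x / y) ^ m * besselJ m y :=
  besselJ_monotone_bound_general m x y hx hxy hym
end

section
/- For every integer m ≥ 1 and real x with 0 < x ≤ m, it holds 0 ≤ J_m'(x)/J_m(x) ≤ m/x − x/(2(m+1)) ≤ m/x. -/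
/-!
Write `J_n(x) = (x/2)^n G_n(x²/4)` with the entire series `G_n(t) = ∑ (-t)^k / (k! (n+k)!)`.
Comparing coefficients gives `G_n' = -G_{n+1}` and `G_n + t G_{n+2} = (n+1) G_{n+1}`, i.e.
`x J_n' = n J_n - x J_{n+1}` and `x (J_n + J_{n+2}) = 2(n+1) J_{n+1}`. Hence `g = x J_n'` satisfies
`x g' = (n² - x²) J_n`, and since `J_n > 0` just to the right of `0`, a first-zero argument gives
`J_n > 0` and `J_n' ≥ 0` on `(0, n]`. For `0 < x ≤ m`, positivity of `J_{m+2}(x)` then yields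
`x J_m' = m J_m - x J_{m+1} ≤ m J_m - x² J_m / (2(m+1))`.
-/

open Set Filter Topology Nat

section PowerSeries

variable {a : ℕ → ℝ}

theorem summable_mul_pow_of_abs_le_inv_factorial (ha : ∀ k, |a k| ≤ (k ! : ℝ)⁻¹)
    (t : ℝ) :
    Summable fun k => a k * t ^ k := by
  refine .of_norm_bounded (Real.summable_pow_div_factorial |t|) fun k => ?_
  rw [Real.norm_eq_abs, abs_mul, abs_pow, div_eq_inv_mul]
  exact mul_le_mul_of_nonneg_right (ha k) (by positivity)

theorem hasDerivAt_tsum_mul_pow_of_abs_le_inv_factorial (ha : ∀ k, |a k| ≤ (k ! : ℝ)⁻¹)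
    (t : ℝ) :
    HasDerivAt (fun t => ∑' k, a k * t ^ k) (∑' k, (k + 1) * a (k + 1) * t ^ k) t := by
  set R := |t| + 1
  have hR : 1 ≤ R := by simp [R]
  have hbound : ∀ k, ∀ y ∈ Metric.ball (0 : ℝ) R,
      ‖a k * (k * y ^ (k - 1))‖ ≤ (2 * R) ^ k / k ! := by
    intro k y hy
    rw [mem_ball_zero_iff, Real.norm_eq_abs] at hy
    have hk : (k : ℝ) ≤ 2 ^ k := by exact_mod_cast (Nat.lt_two_pow_self).le
    have hy' : |y| ^ (k - 1) ≤ R ^ k :=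
      (pow_le_pow_left₀ (abs_nonneg y) hy.le _).trans (pow_le_pow_right₀ hR (Nat.sub_le k 1))
    rw [Real.norm_eq_abs, abs_mul, abs_mul, abs_pow, Nat.abs_cast, div_eq_inv_mul, mul_pow]
    gcongr
    exact ha k
  have ht : t ∈ Metric.ball (0 : ℝ) R := by simp [R]
  have hderiv := hasDerivAt_tsum_of_isPreconnected (Real.summable_pow_div_factorial (2 * R))
    Metric.isOpen_ball (convex_ball 0 R).isPreconnected
    (g := fun k y => a k * y ^ k) (g' := fun k y => a k * (k * y ^ (k - 1)))
    (fun k y _ => (hasDerivAt_pow k y).const_mul (a k)) hbound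
    (y₀ := t) ht (summable_mul_pow_of_abs_le_inv_factorial ha t) ht
  have hsum : Summable fun k => a k * (k * t ^ (k - 1)) :=
    .of_norm_bounded (Real.summable_pow_div_factorial (2 * R)) fun k => hbound k t ht
  refine hderiv.congr_deriv ?_
  rw [hsum.tsum_eq_zero_add]
  simp only [CharP.cast_eq_zero, zero_mul, mul_zero, zero_add, Nat.cast_add, Nat.cast_one,
    add_tsub_cancel_right]
  exact tsum_congr fun k => by ring

end PowerSeries

noncomputable def besselCoeff (n k : ℕ) : ℝ := (-1) ^ k / (k ! * (n + k)! : ℝ)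

theorem abs_besselCoeff_le (n k : ℕ) : |besselCoeff n k| ≤ (k ! : ℝ)⁻¹ := by
  rw [besselCoeff, abs_div, abs_pow, abs_neg, abs_one, one_pow, one_div,
    abs_of_pos (by positivity)]
  gcongr
  exact le_mul_of_one_le_right (by positivity) (by exact_mod_cast (n + k).factorial_pos)

theorem besselCoeff_zero (n : ℕ) : besselCoeff n 0 = (n ! : ℝ)⁻¹ := by
  simp [besselCoeff]

theorem succ_mul_besselCoeff_succ (n k : ℕ) :
    (k + 1) * besselCoeff n (k + 1) = -besselCoeff (n + 1) k := by
  rw [besselCoeff, besselCoeff, show n + (k + 1) = n + k + 1 by ring,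
    show n + 1 + k = n + k + 1 by ring, Nat.factorial_succ k]
  push_cast
  field_simp
  ring

theorem succ_mul_besselCoeff_succ_sub_besselCoeff (n k : ℕ) :
    (n + 1) * besselCoeff (n + 1) (k + 1) - besselCoeff n (k + 1) = besselCoeff (n + 2) k := by
  rw [besselCoeff, besselCoeff, besselCoeff, show n + 1 + (k + 1) = n + k + 1 + 1 by ring,
    show n + (k + 1) = n + k + 1 by ring, show n + 2 + k = n + k + 1 + 1 by ring,
    Nat.factorial_succ (n + k + 1), Nat.factorial_succ k]
  push_cast
  field_simp
  ring

theorem succ_mul_besselCoeff_zero (n : ℕ) :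
    (n + 1) * besselCoeff (n + 1) 0 = besselCoeff n 0 := by
  rw [besselCoeff_zero, besselCoeff_zero, Nat.factorial_succ]
  push_cast
  field_simp

noncomputable def besselG (n : ℕ) (t : ℝ) : ℝ := ∑' k, besselCoeff n k * t ^ k

theorem summable_besselCoeff_mul_pow (n : ℕ) (t : ℝ) :
    Summable fun k => besselCoeff n k * t ^ k :=
  summable_mul_pow_of_abs_le_inv_factorial (abs_besselCoeff_le n) t

theorem hasDerivAt_besselG (n : ℕ) (t : ℝ) : HasDerivAt (besselG n) (-besselG (n + 1) t) t := by
  refine (hasDerivAt_tsum_mul_pow_of_abs_le_inv_factorial (abs_besselCoeff_le n) t).congr_deriv ?_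
  rw [besselG, ← tsum_neg]
  exact tsum_congr fun k => by rw [succ_mul_besselCoeff_succ, neg_mul]

theorem continuous_besselG (n : ℕ) : Continuous (besselG n) :=
  continuous_iff_continuousAt.2 fun t => (hasDerivAt_besselG n t).continuousAt

theorem besselG_zero_pos (n : ℕ) : 0 < besselG n 0 := by
  rw [besselG, tsum_eq_single 0 fun k hk => by simp [hk], besselCoeff_zero]
  simp [Nat.factorial_pos]

theorem besselG_add_mul_besselG (n : ℕ) (t : ℝ) :
    besselG n t + t * besselG (n + 2) t = (n + 1) * besselG (n + 1) t := by
  have hdiff : (n + 1) * besselG (n + 1) t - besselG n t =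
      ∑' k, ((n + 1) * besselCoeff (n + 1) k - besselCoeff n k) * t ^ k := by
    rw [besselG, besselG, ← tsum_mul_left, ← Summable.tsum_sub]
    · exact tsum_congr fun k => by ring
    · exact (summable_besselCoeff_mul_pow (n + 1) t).mul_left _
    · exact summable_besselCoeff_mul_pow n t
  have hsum :
      Summable fun k => ((n + 1) * besselCoeff (n + 1) k - besselCoeff n k) * t ^ k := by
    simpa only [sub_mul, mul_assoc] using
      ((summable_besselCoeff_mul_pow (n + 1) t).mul_left _).sub (summable_besselCoeff_mul_pow n t)
  rw [eq_comm, ← sub_eq_iff_eq_add', hdiff, hsum.tsum_eq_zero_add, succ_mul_besselCoeff_zero,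
    sub_self, zero_mul, zero_add, besselG, ← tsum_mul_left]
  exact tsum_congr fun k => by rw [succ_mul_besselCoeff_succ_sub_besselCoeff, pow_succ]; ring

theorem besselJ_eq_mul_besselG (n : ℕ) (x : ℝ) :
    besselJ n x = (x / 2) ^ n * besselG n (x ^ 2 / 4) := by
  rw [besselJ, besselG, ← tsum_mul_left]
  refine tsum_congr fun k => ?_
  rw [besselCoeff, pow_add, pow_mul, div_pow, div_pow]
  push_cast
  ring

theorem hasDerivAt_besselJ (n : ℕ) (x : ℝ) :
    HasDerivAt (besselJ n)
      (n / 2 * (x / 2) ^ (n - 1) * besselG n (x ^ 2 / 4) - besselJ (n + 1) x) x := by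
  have hpow : HasDerivAt (fun x => (x / 2) ^ n) (n * (x / 2) ^ (n - 1) * (1 / 2)) x :=
    (hasDerivAt_pow n (x / 2)).comp x ((hasDerivAt_id x).div_const 2)
  have hG : HasDerivAt (fun x => besselG n (x ^ 2 / 4))
      (-besselG (n + 1) (x ^ 2 / 4) * (x / 2)) x :=
    ((hasDerivAt_besselG n _).comp x ((hasDerivAt_pow 2 x).div_const 4)).congr_deriv (by ring)
  rw [funext (besselJ_eq_mul_besselG n)]
  refine (hpow.mul hG).congr_deriv ?_
  rw [besselJ_eq_mul_besselG, pow_succ]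
  ring

theorem differentiable_besselJ (n : ℕ) : Differentiable ℝ (besselJ n) :=
  fun x => (hasDerivAt_besselJ n x).differentiableAt

theorem mul_deriv_besselJ (n : ℕ) (x : ℝ) :
    x * deriv (besselJ n) x = n * besselJ n x - x * besselJ (n + 1) x := by
  rw [(hasDerivAt_besselJ n x).deriv, besselJ_eq_mul_besselG n x]
  rcases n with _ | n
  · simp
  · rw [pow_succ]
    push_cast
    ring

theorem mul_besselJ_add_besselJ (n : ℕ) (x : ℝ) :
    x * (besselJ n x + besselJ (n + 2) x) = 2 * (n + 1) * besselJ (n + 1) x := by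
  rw [besselJ_eq_mul_besselG, besselJ_eq_mul_besselG, besselJ_eq_mul_besselG]
  linear_combination x * (x / 2) ^ n * besselG_add_mul_besselG n (x ^ 2 / 4)

theorem eventually_besselJ_pos (n : ℕ) : ∀ᶠ x in 𝓝[>] 0, 0 < besselJ n x := by
  have hG : ∀ᶠ x in 𝓝 (0 : ℝ), 0 < besselG n (x ^ 2 / 4) := by
    have hc : Continuous fun x : ℝ => besselG n (x ^ 2 / 4) :=
      (continuous_besselG n).comp (by fun_prop)
    simpa using hc.continuousAt.eventually (lt_mem_nhds (by simpa using besselG_zero_pos n))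
  filter_upwards [nhdsWithin_le_nhds hG, self_mem_nhdsWithin] with x hx hx0
  rw [besselJ_eq_mul_besselG]
  exact mul_pos (pow_pos (half_pos hx0) n) hx

section FirstZero

variable {f g : ℝ → ℝ} {b : ℝ}

theorem monotoneOn_and_nonneg_of_pos_on_Ioo (hf : Differentiable ℝ f) (hg : Differentiable ℝ g)
    (hg0 : g 0 = 0) (hf' : ∀ x ∈ Ioo 0 b, 0 ≤ g x → 0 ≤ deriv f x)
    (hg' : ∀ x ∈ Ioo 0 b, 0 < f x → 0 ≤ deriv g x) {z : ℝ} (hzb : z ≤ b)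
    (hpos : ∀ x ∈ Ioo 0 z, 0 < f x) :
    MonotoneOn f (Ioc 0 z) ∧ ∀ x ∈ Icc 0 z, 0 ≤ g x := by
  have hgmono : MonotoneOn g (Icc 0 z) :=
    monotoneOn_of_deriv_nonneg (convex_Icc 0 z) hg.continuous.continuousOn hg.differentiableOn
      fun x hx => by
        rw [interior_Icc] at hx
        exact hg' x ⟨hx.1, hx.2.trans_le hzb⟩ (hpos x hx)
  have hgnonneg : ∀ x ∈ Icc 0 z, 0 ≤ g x := fun x hx =>
    hg0 ▸ hgmono ⟨le_rfl, hx.1.trans hx.2⟩ hx hx.1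
  refine ⟨monotoneOn_of_deriv_nonneg (convex_Ioc 0 z) hf.continuous.continuousOn
    hf.differentiableOn fun x hx => ?_, hgnonneg⟩
  rw [interior_Ioc] at hx
  exact hf' x ⟨hx.1, hx.2.trans_le hzb⟩ (hgnonneg x (Ioo_subset_Icc_self hx))

/-- A first-zero argument: while `f > 0`, `g` increases from `g 0 = 0`, so `f' ≥ 0` and `f`
cannot come back down to `0`. -/
theorem pos_and_nonneg_of_deriv_nonneg (hf : Differentiable ℝ f) (hg : Differentiable ℝ g)
    (hg0 : g 0 = 0) (hf0 : ∀ᶠ x in 𝓝[>] 0, 0 < f x)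
    (hf' : ∀ x ∈ Ioo 0 b, 0 ≤ g x → 0 ≤ deriv f x)
    (hg' : ∀ x ∈ Ioo 0 b, 0 < f x → 0 ≤ deriv g x) :
    ∀ x ∈ Ioc 0 b, 0 < f x ∧ 0 ≤ g x := by
  obtain ⟨ε, hε : 0 < ε, hεf⟩ := mem_nhdsGT_iff_exists_Ioo_subset.1 hf0
  have hfpos : ∀ x ∈ Ioc 0 b, 0 < f x := by
    intro x hx
    by_contra! hfx
    obtain ⟨z, ⟨⟨hεz, hzx⟩, hfz⟩, hzmin⟩ :
        ∃ z, IsLeast (Icc (ε / 2) x ∩ {y | f y ≤ 0}) z := by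
      refine IsCompact.exists_isLeast ((isCompact_Icc).inter_right
        (isClosed_le hf.continuous continuous_const)) ⟨x, ⟨?_, le_rfl⟩, hfx⟩
      by_contra! hxε
      exact (hεf ⟨hx.1, by linarith⟩ : 0 < f x).not_ge hfx
    have hpos : ∀ y ∈ Ioo 0 z, 0 < f y := by
      intro y hy
      by_contra! hfy
      have hεy : ε ≤ y := not_lt.1 fun hyε => (hεf ⟨hy.1, hyε⟩ : 0 < f y).not_ge hfy
      exact (hzmin ⟨⟨by linarith, hy.2.le.trans hzx⟩, hfy⟩).not_gt hy.2
    have hmono :=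
      (monotoneOn_and_nonneg_of_pos_on_Ioo hf hg hg0 hf' hg' (hzx.trans hx.2) hpos).1
    have hfε : 0 < f (ε / 2) := hεf ⟨half_pos hε, half_lt_self hε⟩
    exact hfε.not_ge
      ((hmono ⟨half_pos hε, hεz⟩ ⟨(half_pos hε).trans_le hεz, le_rfl⟩ hεz).trans hfz)
  intro x hx
  exact ⟨hfpos x hx, (monotoneOn_and_nonneg_of_pos_on_Ioo hf hg hg0 hf' hg' le_rfl
    fun y hy => hfpos y (Ioo_subset_Ioc_self hy)).2 x (Ioc_subset_Icc_self hx)⟩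

end FirstZero

theorem besselJ_pos_and_deriv_nonneg (n : ℕ) {x : ℝ} (hx : x ∈ Ioc 0 (n : ℝ)) :
    0 < besselJ n x ∧ 0 ≤ deriv (besselJ n) x := by
  set g := fun x => n * besselJ n x - x * besselJ (n + 1) x
  have hg : ∀ x, HasDerivAt g (n * deriv (besselJ n) x -
      (besselJ (n + 1) x + x * deriv (besselJ (n + 1)) x)) x := fun x =>
    ((differentiable_besselJ n x).hasDerivAt.const_mul _).sub
      ((hasDerivAt_id x).mul (differentiable_besselJ (n + 1) x).hasDerivAt) |>.congr_deriv
      (by simp)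
  have hmul_deriv_g : ∀ x, x * deriv g x = (n ^ 2 - x ^ 2) * besselJ n x := fun x => by
    have hsucc := mul_deriv_besselJ (n + 1) x
    push_cast at hsucc
    rw [(hg x).deriv]
    linear_combination n * mul_deriv_besselJ n x - x * hsucc + x * mul_besselJ_add_besselJ n x
  refine (pos_and_nonneg_of_deriv_nonneg (f := besselJ n) (g := g) (differentiable_besselJ n)
    (fun x => (hg x).differentiableAt) ?_ (eventually_besselJ_pos n) ?_ ?_ x hx).imp_right
    fun hgx => ?_
  · linear_combination -mul_deriv_besselJ n 0
  · intro y hy hgy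
    exact nonneg_of_mul_nonneg_right ((mul_deriv_besselJ n y).symm ▸ hgy) hy.1
  · intro y hy hJ
    refine nonneg_of_mul_nonneg_right ?_ hy.1
    rw [hmul_deriv_g]
    exact mul_nonneg (by nlinarith [hy.1, hy.2]) hJ.le
  · exact nonneg_of_mul_nonneg_right ((mul_deriv_besselJ n x).symm ▸ hgx) hx.1

theorem besselJ_logderiv_bound_general (m : ℕ) (x : ℝ) (hx : 0 < x)
    (hxm : x ≤ m) :
    0 ≤ deriv (besselJ m) x / besselJ m x ∧
      deriv (besselJ m) x / besselJ m x ≤ (m : ℝ) / x - x / (2 * ((m : ℝ) + 1)) ∧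
      (m : ℝ) / x - x / (2 * ((m : ℝ) + 1)) ≤ (m : ℝ) / x := by
  obtain ⟨hJ, hJ'⟩ := besselJ_pos_and_deriv_nonneg m ⟨hx, hxm⟩
  have hJ₂ := (besselJ_pos_and_deriv_nonneg (m + 2) ⟨hx, by push_cast; linarith⟩).1
  have hm : (0 : ℝ) < 2 * (m + 1) := by positivity
  refine ⟨div_nonneg hJ' hJ.le, ?_, sub_le_self _ (by positivity)⟩
  have hJ₁ : x / (2 * (m + 1)) * besselJ m x ≤ besselJ (m + 1) x := by
    rw [div_mul_eq_mul_div, div_le_iff₀ hm, mul_comm _ (2 * _), ← mul_besselJ_add_besselJ]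
    exact mul_le_mul_of_nonneg_left (le_add_of_nonneg_right hJ₂.le) hx.le
  have hrhs : x * ((m / x - x / (2 * (m + 1))) * besselJ m x) =
      m * besselJ m x - x * (x / (2 * (m + 1)) * besselJ m x) := by
    field_simp
  rw [div_le_iff₀ hJ, ← mul_le_mul_iff_right₀ hx, mul_deriv_besselJ, hrhs]
  exact sub_le_sub_left (mul_le_mul_of_nonneg_left hJ₁ hx.le) _

/-- for `m ≥ 1` and `0 < x ≤ m`,
`0 ≤ J_m'(x)/J_m(x) ≤ m/x − x/(2(m+1)) ≤ m/x`. -/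
theorem besselJ_logderiv_bound (m : ℕ) (hm : 1 ≤ m) (x : ℝ) (hx : 0 < x)
    (hxm : x ≤ m) :
    0 ≤ deriv (besselJ m) x / besselJ m x ∧
      deriv (besselJ m) x / besselJ m x ≤ (m : ℝ) / x - x / (2 * ((m : ℝ) + 1)) ∧
      (m : ℝ) / x - x / (2 * ((m : ℝ) + 1)) ≤ (m : ℝ) / x :=
  besselJ_logderiv_bound_general m x hx hxm
end
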